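/- Let R ∈ ℝ with R ≠ 1. A real symmetric 5×5 matrix Θ satisfies the intertwining relation H_c(R)ᵀ Θ = Θ H_c(R) if and only if Θ = Θ(t,u,z,q,p) for the (unique) parameters t = Θ₂₂, u = Θ₀₁, z = Θ₀₂, q = Θ₀₃, p = Θ₀₄; in particular, for every choice of real t, u, z, q, p the explicit matrix Θ(t,u,z,q,p) satisfies H_c(R)ᵀ Θ(t,u,z,q,p) = Θ(t,u,z,q,p) H_c(R). -/
import Mathlib


open Matrix

/-- The Hamiltonian `H_c(R)` of Eq. (dvojak). -/
def Hc (R : ℝ) : Matrix (Fin 5) (Fin 5) ℝ :=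
  !![2 + R, -1 + R, 0, 0, 0;
     -1, 2, -1, 0, 0;
     0, -1, 2, -1, 0;
     0, 0, -1, 2, -1 + R;
     0, 0, 0, -1, 2 + R]

/-- The explicit five-parameter family of symmetric matrices `Θ(t,u,z,q,p)`
of Eq. (metrac), for `R ≠ 1`. -/
noncomputable def ThetaC (R t u z q p : ℝ) : Matrix (Fin 5) (Fin 5) ℝ :=
  !![(R * z - t + z + R * u + R * q + p) / (R - 1), u, z, q, p;
     u, -R * q - p + t - R * z, R * z + u + q, R * q + z + p, q - R * q;
     z, R * z + u + q, t, R * z + u + q, z - R * z;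
     q, R * q + z + p, R * z + u + q, -R * q - p + t - R * z, u - R * u;
     p, q - R * q, z - R * z, u - R * u,
       -z + R * p - R * q + R ^ 2 * q - p - R * u + t - t * R + R ^ 2 * z + R ^ 2 * u]

set_option maxHeartbeats 4000000 in
private lemma ThetaC_intertwines (R t u z q p : ℝ) (hR' : R - 1 ≠ 0) :
    (Hc R)ᵀ * ThetaC R t u z q p = ThetaC R t u z q p * Hc R := by
  ext i j
  fin_cases i <;> fin_cases j
  all_goals simp only [Matrix.mul_apply, Matrix.transpose_apply, Fin.sum_univ_five]
  all_goals simp [Hc, ThetaC, Matrix.vecHead, Matrix.vecTail]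
  all_goals try field_simp
  all_goals ring

set_option maxHeartbeats 4000000 in
/-- for `R ≠ 1`, a real symmetric 5×5 matrix `Θ` intertwines
`H_c(R)ᵀ Θ = Θ H_c(R)` iff it equals `Θ(t,u,z,q,p)` with
`t = Θ₂₂, u = Θ₀₁, z = Θ₀₂, q = Θ₀₃, p = Θ₀₄`; in particular every
`Θ(t,u,z,q,p)` intertwines. -/
theorem Hc_metric_family_characterization (R : ℝ) (hR : R ≠ 1) :
    (∀ Θ : Matrix (Fin 5) (Fin 5) ℝ, Θ.IsSymm →
      ((Hc R)ᵀ * Θ = Θ * Hc R ↔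
        Θ = ThetaC R (Θ 2 2) (Θ 0 1) (Θ 0 2) (Θ 0 3) (Θ 0 4))) ∧
    (∀ t u z q p : ℝ,
      (Hc R)ᵀ * ThetaC R t u z q p = ThetaC R t u z q p * Hc R) := by
  have hR' : R - 1 ≠ 0 := sub_ne_zero.mpr hR
  refine ⟨fun Θ _ => ⟨fun h => ?_, fun h => by rw [h]; exact ThetaC_intertwines R _ _ _ _ _ hR'⟩,
    fun t u z q p => ThetaC_intertwines R t u z q p hR'⟩
  have e00 := congrFun (congrFun h 0) 0
  have e01 := congrFun (congrFun h 0) 1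
  have e02 := congrFun (congrFun h 0) 2
  have e03 := congrFun (congrFun h 0) 3
  have e04 := congrFun (congrFun h 0) 4
  have e10 := congrFun (congrFun h 1) 0
  have e11 := congrFun (congrFun h 1) 1
  have e12 := congrFun (congrFun h 1) 2
  have e13 := congrFun (congrFun h 1) 3
  have e14 := congrFun (congrFun h 1) 4
  have e20 := congrFun (congrFun h 2) 0
  have e21 := congrFun (congrFun h 2) 1
  have e22 := congrFun (congrFun h 2) 2
  have e23 := congrFun (congrFun h 2) 3
  have e24 := congrFun (congrFun h 2) 4
  have e30 := congrFun (congrFun h 3) 0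
  have e31 := congrFun (congrFun h 3) 1
  have e32 := congrFun (congrFun h 3) 2
  have e33 := congrFun (congrFun h 3) 3
  have e34 := congrFun (congrFun h 3) 4
  simp only [Matrix.mul_apply, Matrix.transpose_apply, Fin.sum_univ_five] at e00 e01 e02 e03 e04 e10 e11 e12 e13 e14 e20 e21 e22 e23 e24 e30 e31 e32 e33 e34
  simp [Hc, Matrix.vecHead, Matrix.vecTail] at e00 e01 e02 e03 e04 e10 e11 e12 e13 e14 e20 e21 e22 e23 e24 e30 e31 e32 e33 e34
  ext i j
  fin_cases i <;> fin_cases j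
  · simp [ThetaC, Matrix.vecHead, Matrix.vecTail]
    rw [eq_div_iff hR']
    linear_combination (-1 : ℝ) * e01 + (-1 : ℝ) * e12 + (-1 : ℝ) * e03
  · simp [ThetaC, Matrix.vecHead, Matrix.vecTail]
  · simp [ThetaC, Matrix.vecHead, Matrix.vecTail]
  · simp [ThetaC, Matrix.vecHead, Matrix.vecTail]
  · simp [ThetaC, Matrix.vecHead, Matrix.vecTail]
  · simp [ThetaC, Matrix.vecHead, Matrix.vecTail]
    linear_combination (-1 : ℝ) * e00
  · simp [ThetaC, Matrix.vecHead, Matrix.vecTail]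
    linear_combination (1 : ℝ) * e12 + (1 : ℝ) * e03
  · simp [ThetaC, Matrix.vecHead, Matrix.vecTail]
    linear_combination (-1 : ℝ) * e02
  · simp [ThetaC, Matrix.vecHead, Matrix.vecTail]
    linear_combination (-1 : ℝ) * e03
  · simp [ThetaC, Matrix.vecHead, Matrix.vecTail]
    linear_combination (-1 : ℝ) * e04
  · simp [ThetaC, Matrix.vecHead, Matrix.vecTail]
    linear_combination (-1 : ℝ) * e10 + (-1 : ℝ) * e01 + (R : ℝ) * e00
  · simp [ThetaC, Matrix.vecHead, Matrix.vecTail]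
    linear_combination (-1 : ℝ) * e11 + (-1 + R : ℝ) * e00 + (-1 : ℝ) * e02
  · simp [ThetaC, Matrix.vecHead, Matrix.vecTail]
  · simp [ThetaC, Matrix.vecHead, Matrix.vecTail]
    linear_combination (-1 : ℝ) * e13 + (-1 : ℝ) * e02 + (-1 : ℝ) * e04
  · simp [ThetaC, Matrix.vecHead, Matrix.vecTail]
    linear_combination (-1 : ℝ) * e14 + (-1 + R : ℝ) * e03 + (R : ℝ) * e04
  · simp [ThetaC, Matrix.vecHead, Matrix.vecTail]
    linear_combination (-1 : ℝ) * e20 + (R + -1*R^2 : ℝ) * e00 + (R : ℝ) * e10 + (R : ℝ) * e01 + (-1 : ℝ) * e11 + (-1 : ℝ) * e02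
  · simp [ThetaC, Matrix.vecHead, Matrix.vecTail]
    linear_combination (-1 : ℝ) * e21 + (-1 : ℝ) * e12 + (-1 : ℝ) * e03 + (-1 + R : ℝ) * e10 + (-1 + R : ℝ) * e01 + (R + -1*R^2 : ℝ) * e00
  · simp [ThetaC, Matrix.vecHead, Matrix.vecTail]
    linear_combination (-1 : ℝ) * e22 + (-1 : ℝ) * e02 + (-1 : ℝ) * e11 + (-1 + R : ℝ) * e00 + (-1 : ℝ) * e13 + (-1 : ℝ) * e04
  · simp [ThetaC, Matrix.vecHead, Matrix.vecTail]
    linear_combination (-1 : ℝ) * e23 + (R : ℝ) * e03 + (-1 : ℝ) * e14 + (R : ℝ) * e04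
  · simp [ThetaC, Matrix.vecHead, Matrix.vecTail]
    linear_combination (-1 : ℝ) * e24 + (R + -1*R^2 : ℝ) * e04 + (-1 + R : ℝ) * e13 + (-1 + R : ℝ) * e02 + (R : ℝ) * e14 + (R + -1*R^2 : ℝ) * e03
  · simp [ThetaC, Matrix.vecHead, Matrix.vecTail]
    linear_combination (-1 : ℝ) * e30 + (R + -1*R^2 : ℝ) * e10 + (R + -1*R^2 : ℝ) * e01 + (-2*R^2 + R^3 : ℝ) * e00 + (R : ℝ) * e20 + (R : ℝ) * e11 + (R : ℝ) * e02 + (-1 : ℝ) * e21 + (-1 : ℝ) * e12 + (-1 : ℝ) * e03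
  · simp [ThetaC, Matrix.vecHead, Matrix.vecTail]
    linear_combination (-1 : ℝ) * e31 + (-1 + R : ℝ) * e11 + (R + -2*R^2 + R^3 : ℝ) * e00 + (-1 + R : ℝ) * e02 + (-1 + R : ℝ) * e20 + (R + -1*R^2 : ℝ) * e10 + (R + -1*R^2 : ℝ) * e01 + (-1 : ℝ) * e22 + (-1 : ℝ) * e13 + (-1 : ℝ) * e04
  · simp [ThetaC, Matrix.vecHead, Matrix.vecTail]
    linear_combination (-1 : ℝ) * e32 + (-1 : ℝ) * e21 + (-1 : ℝ) * e12 + (-1 + R : ℝ) * e03 + (-1 + R : ℝ) * e10 + (-1 + R : ℝ) * e01 + (R + -1*R^2 : ℝ) * e00 + (-1 : ℝ) * e23 + (-1 : ℝ) * e14 + (R : ℝ) * e04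
  · simp [ThetaC, Matrix.vecHead, Matrix.vecTail]
    linear_combination (-1 : ℝ) * e33 + (-1 + R : ℝ) * e13 + (-1 + R : ℝ) * e02 + (R + -1*R^2 : ℝ) * e04 + (-1 : ℝ) * e22 + (-1 : ℝ) * e11 + (-1 + R : ℝ) * e00 + (-1 : ℝ) * e24 + (R : ℝ) * e14 + (R + -1*R^2 : ℝ) * e03
  · simp [ThetaC, Matrix.vecHead, Matrix.vecTail]
    linear_combination (-1 : ℝ) * e34 + (R + -1*R^2 : ℝ) * e14 + (1 + -2*R^2 + R^3 : ℝ) * e03 + (-2*R^2 + R^3 : ℝ) * e04 + (-1 + R : ℝ) * e23 + (R : ℝ) * e24 + (R + -1*R^2 : ℝ) * e13 + (R + -1*R^2 : ℝ) * e02
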